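/- Adequacy for the simply-typed λ-calculus with sums in the μμ̃ machine: if Γ ⊢ t : A and σ maps each (x:B) ∈ Γ to a truth witness of B, then ⟦t⟧[σ] ∈ |A|, where |·| and ‖·‖ are defined with falsity values for arrows ‖A→B‖v = |A| × ‖B‖ and truth values for sums |A₁+A₂|v = { inj_i u | u ∈ |A_i| }, closed by (bi-)orthogonality with respect to a pole closed under anti-reduction. -/

import Mathlib

mutual
/-- μμ̃ machine terms. -/
inductive MTm where
  | var : Nat → MTm
  | mu : MMach → MTm            -- μα.m, binds co-variable 0
  | muPair : MMach → MTm        -- μ(x·α).m, binds variable 0 and co-variable 0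
  | injl : MTm → MTm
  | injr : MTm → MTm
/-- μμ̃ machine co-terms (contexts). -/
inductive MCo where
  | covar : Nat → MCo
  | cons : MTm → MCo → MCo      -- t·e
  | mutilde : MMach → MCo       -- μ̃x.m, binds variable 0
  | case : MMach → MMach → MCo  -- μ̃[inj₁x₁.m₁ | inj₂x₂.m₂], each branch binds variable 0
/-- μμ̃ machine configurations ⟨t | e⟩. -/
inductive MMach where
  | conf : MTm → MCo → MMach
end

/-- Lift a renaming under a binder. -/
def liftN (f : Nat → Nat) : Nat → Nat
  | 0 => 0
  | n + 1 => f n + 1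

mutual
/-- Simultaneous renaming of variables (ft) and co-variables (fc). -/
def MTm.rename (ft fc : Nat → Nat) : MTm → MTm
  | .var n => .var (ft n)
  | .mu m => .mu (MMach.rename ft (liftN fc) m)
  | .muPair m => .muPair (MMach.rename (liftN ft) (liftN fc) m)
  | .injl t => .injl (MTm.rename ft fc t)
  | .injr t => .injr (MTm.rename ft fc t)
def MCo.rename (ft fc : Nat → Nat) : MCo → MCo
  | .covar n => .covar (fc n)
  | .cons t e => .cons (MTm.rename ft fc t) (MCo.rename ft fc e)
  | .mutilde m => .mutilde (MMach.rename (liftN ft) fc m)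
  | .case m₁ m₂ => .case (MMach.rename (liftN ft) fc m₁) (MMach.rename (liftN ft) fc m₂)
def MMach.rename (ft fc : Nat → Nat) : MMach → MMach
  | .conf t e => .conf (MTm.rename ft fc t) (MCo.rename ft fc e)
end

/-- Lift a substitution under a variable binder. -/
def upT (σt : Nat → MTm) (σc : Nat → MCo) : (Nat → MTm) × (Nat → MCo) :=
  (fun n => match n with
    | 0 => .var 0
    | n + 1 => MTm.rename Nat.succ id (σt n),
   fun n => MCo.rename Nat.succ id (σc n))

/-- Lift a substitution under a co-variable binder. -/
def upC (σt : Nat → MTm) (σc : Nat → MCo) : (Nat → MTm) × (Nat → MCo) :=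
  (fun n => MTm.rename id Nat.succ (σt n),
   fun n => match n with
    | 0 => .covar 0
    | n + 1 => MCo.rename id Nat.succ (σc n))

mutual
/-- Simultaneous substitution of terms for variables and co-terms for co-variables. -/
def MTm.subst (σt : Nat → MTm) (σc : Nat → MCo) : MTm → MTm
  | .var n => σt n
  | .mu m => .mu (MMach.subst (upC σt σc).1 (upC σt σc).2 m)
  | .muPair m =>
      .muPair (MMach.subst (upT (upC σt σc).1 (upC σt σc).2).1
                           (upT (upC σt σc).1 (upC σt σc).2).2 m)
  | .injl t => .injl (MTm.subst σt σc t)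
  | .injr t => .injr (MTm.subst σt σc t)
def MCo.subst (σt : Nat → MTm) (σc : Nat → MCo) : MCo → MCo
  | .covar n => σc n
  | .cons t e => .cons (MTm.subst σt σc t) (MCo.subst σt σc e)
  | .mutilde m => .mutilde (MMach.subst (upT σt σc).1 (upT σt σc).2 m)
  | .case m₁ m₂ => .case (MMach.subst (upT σt σc).1 (upT σt σc).2 m₁)
                         (MMach.subst (upT σt σc).1 (upT σt σc).2 m₂)
def MMach.subst (σt : Nat → MTm) (σc : Nat → MCo) : MMach → MMach
  | .conf t e => .conf (MTm.subst σt σc t) (MCo.subst σt σc e)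
end

/-- m[e/α] : substitute co-term `e` for co-variable 0. -/
def MMach.substCo (m : MMach) (e : MCo) : MMach :=
  MMach.subst MTm.var (fun n => match n with | 0 => e | n + 1 => .covar n) m

/-- m[t/x] : substitute term `t` for variable 0. -/
def MMach.substTm (m : MMach) (t : MTm) : MMach :=
  MMach.subst (fun n => match n with | 0 => t | n + 1 => .var n) MCo.covar m

/-- m[t/x, e/α] : substitute both a term and a co-term. -/
def MMach.substTmCo (m : MMach) (t : MTm) (e : MCo) : MMach :=
  MMach.subst (fun n => match n with | 0 => t | n + 1 => .var n)
              (fun n => match n with | 0 => e | n + 1 => .covar n) m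

mutual
/-- Reduction of μμ̃ terms (congruence). -/
inductive StepT : MTm → MTm → Prop
  | mu {m m'} : StepM m m' → StepT (.mu m) (.mu m')
  | muPair {m m'} : StepM m m' → StepT (.muPair m) (.muPair m')
  | injl {t t'} : StepT t t' → StepT (.injl t) (.injl t')
  | injr {t t'} : StepT t t' → StepT (.injr t) (.injr t')
/-- Reduction of μμ̃ co-terms (congruence). -/
inductive StepC : MCo → MCo → Prop
  | consl {t t'} (e) : StepT t t' → StepC (.cons t e) (.cons t' e)
  | consr (t) {e e'} : StepC e e' → StepC (.cons t e) (.cons t e')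
  | mutilde {m m'} : StepM m m' → StepC (.mutilde m) (.mutilde m')
  | casel {m₁ m₁'} (m₂) : StepM m₁ m₁' → StepC (.case m₁ m₂) (.case m₁' m₂)
  | caser (m₁) {m₂ m₂'} : StepM m₂ m₂' → StepC (.case m₁ m₂) (.case m₁ m₂')
/-- Reduction of μμ̃ machine configurations. -/
inductive StepM : MMach → MMach → Prop
  | mu (m : MMach) (e : MCo) : StepM (.conf (.mu m) e) (m.substCo e)
  | mutilde (t : MTm) (m : MMach) : StepM (.conf t (.mutilde m)) (m.substTm t)
  | muPair (m : MMach) (u : MTm) (e : MCo) :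
      StepM (.conf (.muPair m) (.cons u e)) (m.substTmCo u e)
  | casel (t : MTm) (m₁ m₂ : MMach) :
      StepM (.conf (.injl t) (.case m₁ m₂)) (m₁.substTm t)
  | caser (t : MTm) (m₁ m₂ : MMach) :
      StepM (.conf (.injr t) (.case m₁ m₂)) (m₂.substTm t)
  | congT {t t'} (e) : StepT t t' → StepM (.conf t e) (.conf t' e)
  | congC (t) {e e'} : StepC e e' → StepM (.conf t e) (.conf t e')
end

/-- Source λ-calculus with sums (de Bruijn). In `case t u₁ u₂` each branch binds
variable 0. -/
inductive LTm where
  | var : Nat → LTm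
  | lam : LTm → LTm
  | app : LTm → LTm → LTm
  | injl : LTm → LTm
  | injr : LTm → LTm
  | case : LTm → LTm → LTm → LTm

/-- Compilation of λ-terms with sums into the μμ̃ machine (call-by-name). -/
def transl : LTm → MTm
  | .var n => .var n
  | .lam t => .muPair (.conf (transl t) (.covar 0))
  | .app t u => .mu (.conf (transl t) (.cons (transl u) (.covar 0)))
  | .injl t => .injl (transl t)
  | .injr t => .injr (transl t)
  | .case t u₁ u₂ =>
      .mu (.conf (transl t)
        (.case (.conf (transl u₁) (.covar 0)) (.conf (transl u₂) (.covar 0))))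

/-- Simple types: a (positive) base type, function types and sum types. -/
inductive Ty where
  | base : Ty
  | arrow : Ty → Ty → Ty
  | sum : Ty → Ty → Ty

/-- Typing judgment of the simply-typed λ-calculus with sums. -/
inductive HasTy : List Ty → LTm → Ty → Prop
  | var {Γ n A} : Γ[n]? = some A → HasTy Γ (.var n) A
  | lam {Γ t A B} : HasTy (A :: Γ) t B → HasTy Γ (.lam t) (.arrow A B)
  | app {Γ t u A B} : HasTy Γ t (.arrow A B) → HasTy Γ u A → HasTy Γ (.app t u) B
  | injl {Γ t A B} : HasTy Γ t A → HasTy Γ (.injl t) (.sum A B)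
  | injr {Γ t A B} : HasTy Γ t B → HasTy Γ (.injr t) (.sum A B)
  | case {Γ t u₁ u₂ A B C} : HasTy Γ t (.sum A B) → HasTy (A :: Γ) u₁ C →
      HasTy (B :: Γ) u₂ C → HasTy Γ (.case t u₁ u₂) C

/-- Orthogonal of a set of terms. -/
def orthC (pole : MMach → Prop) (S : Set MTm) : Set MCo :=
  {e | ∀ t ∈ S, pole (.conf t e)}

/-- Orthogonal of a set of co-terms. -/
def orthT (pole : MMach → Prop) (S : Set MCo) : Set MTm :=
  {t | ∀ e ∈ S, pole (.conf t e)}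

/-- Truth witnesses |A|, defined by recursion on types:
for arrows, |A→B| = (‖A→B‖v)⊥ with ‖A→B‖v = { u·e | u ∈ |A|, e ∈ ‖B‖ };
for sums, |A₁+A₂| = (|A₁+A₂|v)⊥⊥ with |A₁+A₂|v = { inj_i u | u ∈ |A_i| };
the base type is interpreted by the bi-orthogonal of a given set of values.
Throughout, ‖B‖ = |B|⊥. -/
def tru (pole : MMach → Prop) (baseTruv : Set MTm) : Ty → Set MTm
  | .base => orthT pole (orthC pole baseTruv)
  | .arrow A B =>
      orthT pole {c | ∃ u e, c = .cons u e ∧ u ∈ tru pole baseTruv A ∧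
        e ∈ orthC pole (tru pole baseTruv B)}
  | .sum A B =>
      orthT pole (orthC pole
        {t | (∃ u, t = .injl u ∧ u ∈ tru pole baseTruv A) ∨
             (∃ u, t = .injr u ∧ u ∈ tru pole baseTruv B)})

/-- Falsity witnesses: ‖A‖ = |A|⊥. -/
def fal (pole : MMach → Prop) (baseTruv : Set MTm) (A : Ty) : Set MCo :=
  orthC pole (tru pole baseTruv A)

/-!
By induction on the typing derivation, for every substitution `σ` realizing `Γ` and every
co-variable substitution (translated terms have no free co-variables, but letting it vary keeps the
induction hypothesis applicable under the binders of `⟦·⟧`). In each case the translated term is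
confronted with an element of the set whose orthogonal is `|A|`; one head step of the machine
(`μ`, `μ(x·α)` or a `case` branch) produces the translation of a subterm under an extended
substitution, and the pole is closed under anti-reduction.
-/

theorem liftN_comp (f g : ℕ → ℕ) : liftN f ∘ liftN g = liftN (f ∘ g) := by
  funext n; cases n <;> rfl

mutual
theorem MTm.rename_rename (ft fc ft' fc' : ℕ → ℕ) :
    ∀ s : MTm, (s.rename ft' fc').rename ft fc = s.rename (ft ∘ ft') (fc ∘ fc')
  | .var _ => rfl
  | .mu m => by simp only [MTm.rename, MMach.rename_rename, liftN_comp]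
  | .muPair m => by simp only [MTm.rename, MMach.rename_rename, liftN_comp]
  | .injl t => by simp only [MTm.rename, MTm.rename_rename]
  | .injr t => by simp only [MTm.rename, MTm.rename_rename]

theorem MCo.rename_rename (ft fc ft' fc' : ℕ → ℕ) :
    ∀ s : MCo, (s.rename ft' fc').rename ft fc = s.rename (ft ∘ ft') (fc ∘ fc')
  | .covar _ => rfl
  | .cons t e => by simp only [MCo.rename, MTm.rename_rename, MCo.rename_rename]
  | .mutilde m => by simp only [MCo.rename, MMach.rename_rename, liftN_comp]
  | .case m₁ m₂ => by simp only [MCo.rename, MMach.rename_rename, liftN_comp]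

theorem MMach.rename_rename (ft fc ft' fc' : ℕ → ℕ) :
    ∀ s : MMach, (s.rename ft' fc').rename ft fc = s.rename (ft ∘ ft') (fc ∘ fc')
  | .conf t e => by simp only [MMach.rename, MTm.rename_rename, MCo.rename_rename]
end

mutual
theorem MTm.subst_rename (σt : ℕ → MTm) (σc : ℕ → MCo) (ft fc : ℕ → ℕ) :
    ∀ s : MTm, (s.rename ft fc).subst σt σc = s.subst (σt ∘ ft) (σc ∘ fc)
  | .var _ => rfl
  | .mu m => by
    simp only [MTm.rename, MTm.subst, MMach.subst_rename]
    congr 2; funext n; cases n <;> rfl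
  | .muPair m => by
    simp only [MTm.rename, MTm.subst, MMach.subst_rename]
    congr 2 <;> funext n <;> cases n <;> rfl
  | .injl t => by simp only [MTm.rename, MTm.subst, MTm.subst_rename]
  | .injr t => by simp only [MTm.rename, MTm.subst, MTm.subst_rename]

theorem MCo.subst_rename (σt : ℕ → MTm) (σc : ℕ → MCo) (ft fc : ℕ → ℕ) :
    ∀ s : MCo, (s.rename ft fc).subst σt σc = s.subst (σt ∘ ft) (σc ∘ fc)
  | .covar _ => rfl
  | .cons t e => by simp only [MCo.rename, MCo.subst, MTm.subst_rename, MCo.subst_rename]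
  | .mutilde m => by
    simp only [MCo.rename, MCo.subst, MMach.subst_rename]
    congr 2; funext n; cases n <;> rfl
  | .case m₁ m₂ => by
    simp only [MCo.rename, MCo.subst, MMach.subst_rename]
    congr 2 <;> funext n <;> cases n <;> rfl

theorem MMach.subst_rename (σt : ℕ → MTm) (σc : ℕ → MCo) (ft fc : ℕ → ℕ) :
    ∀ s : MMach, (s.rename ft fc).subst σt σc = s.subst (σt ∘ ft) (σc ∘ fc)
  | .conf t e => by simp only [MMach.rename, MMach.subst, MTm.subst_rename, MCo.subst_rename]
end

mutual
theorem MTm.rename_subst (ft fc : ℕ → ℕ) (σt : ℕ → MTm) (σc : ℕ → MCo) :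
    ∀ s : MTm, (s.subst σt σc).rename ft fc =
      s.subst (MTm.rename ft fc ∘ σt) (MCo.rename ft fc ∘ σc)
  | .var _ => rfl
  | .mu m => by
    simp only [MTm.rename, MTm.subst, MMach.rename_subst]
    congr 2 <;> funext n <;> cases n <;>
      simp only [Function.comp_apply, upC, MTm.rename_rename, MCo.rename_rename] <;> rfl
  | .muPair m => by
    simp only [MTm.rename, MTm.subst, MMach.rename_subst]
    congr 2 <;> funext n <;> cases n <;>
      simp only [Function.comp_apply, upC, upT, MTm.rename_rename, MCo.rename_rename] <;> rfl
  | .injl t => by simp only [MTm.rename, MTm.subst, MTm.rename_subst]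
  | .injr t => by simp only [MTm.rename, MTm.subst, MTm.rename_subst]

theorem MCo.rename_subst (ft fc : ℕ → ℕ) (σt : ℕ → MTm) (σc : ℕ → MCo) :
    ∀ s : MCo, (s.subst σt σc).rename ft fc =
      s.subst (MTm.rename ft fc ∘ σt) (MCo.rename ft fc ∘ σc)
  | .covar _ => rfl
  | .cons t e => by simp only [MCo.rename, MCo.subst, MTm.rename_subst, MCo.rename_subst]
  | .mutilde m => by
    simp only [MCo.rename, MCo.subst, MMach.rename_subst]
    congr 2 <;> funext n <;> cases n <;>
      simp only [Function.comp_apply, upT, MTm.rename_rename, MCo.rename_rename] <;> rfl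
  | .case m₁ m₂ => by
    simp only [MCo.rename, MCo.subst, MMach.rename_subst]
    congr 2 <;> funext n <;> cases n <;>
      simp only [Function.comp_apply, upT, MTm.rename_rename, MCo.rename_rename] <;> rfl

theorem MMach.rename_subst (ft fc : ℕ → ℕ) (σt : ℕ → MTm) (σc : ℕ → MCo) :
    ∀ s : MMach, (s.subst σt σc).rename ft fc =
      s.subst (MTm.rename ft fc ∘ σt) (MCo.rename ft fc ∘ σc)
  | .conf t e => by simp only [MMach.rename, MMach.subst, MTm.rename_subst, MCo.rename_subst]
end

mutual
theorem MTm.subst_subst (σt τt : ℕ → MTm) (σc τc : ℕ → MCo) :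
    ∀ s : MTm, (s.subst τt τc).subst σt σc =
      s.subst (MTm.subst σt σc ∘ τt) (MCo.subst σt σc ∘ τc)
  | .var _ => rfl
  | .mu m => by
    simp only [MTm.subst, MMach.subst_subst]
    congr 2 <;> funext n <;> cases n <;>
      simp only [Function.comp_apply, upC, MTm.subst_rename, MCo.subst_rename,
        MTm.rename_subst, MCo.rename_subst] <;> rfl
  | .muPair m => by
    simp only [MTm.subst, MMach.subst_subst]
    congr 2 <;> funext n <;> cases n <;>
      simp only [Function.comp_def, id_eq, upC, upT, MTm.rename_rename, MCo.rename_rename,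
        MTm.subst_rename, MCo.subst_rename, MTm.rename_subst, MCo.rename_subst] <;> rfl
  | .injl t => by simp only [MTm.subst, MTm.subst_subst]
  | .injr t => by simp only [MTm.subst, MTm.subst_subst]

theorem MCo.subst_subst (σt τt : ℕ → MTm) (σc τc : ℕ → MCo) :
    ∀ s : MCo, (s.subst τt τc).subst σt σc =
      s.subst (MTm.subst σt σc ∘ τt) (MCo.subst σt σc ∘ τc)
  | .covar _ => rfl
  | .cons t e => by simp only [MCo.subst, MTm.subst_subst, MCo.subst_subst]
  | .mutilde m => by
    simp only [MCo.subst, MMach.subst_subst]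
    congr 2 <;> funext n <;> cases n <;>
      simp only [Function.comp_apply, upT, MTm.subst_rename, MCo.subst_rename,
        MTm.rename_subst, MCo.rename_subst] <;> rfl
  | .case m₁ m₂ => by
    simp only [MCo.subst, MMach.subst_subst]
    congr 2 <;> funext n <;> cases n <;>
      simp only [Function.comp_apply, upT, MTm.subst_rename, MCo.subst_rename,
        MTm.rename_subst, MCo.rename_subst] <;> rfl

theorem MMach.subst_subst (σt τt : ℕ → MTm) (σc τc : ℕ → MCo) :
    ∀ s : MMach, (s.subst τt τc).subst σt σc =
      s.subst (MTm.subst σt σc ∘ τt) (MCo.subst σt σc ∘ τc)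
  | .conf t e => by simp only [MMach.subst, MTm.subst_subst, MCo.subst_subst]
end

def scons {α : Type*} (a : α) (σ : ℕ → α) : ℕ → α
  | 0 => a
  | n + 1 => σ n

theorem upC_var_covar : upC MTm.var MCo.covar = (MTm.var, MCo.covar) := by
  ext n <;> cases n <;> rfl

theorem upT_var_covar : upT MTm.var MCo.covar = (MTm.var, MCo.covar) := by
  ext n <;> cases n <;> rfl

mutual
theorem MTm.subst_var_covar : ∀ s : MTm, s.subst MTm.var MCo.covar = s
  | .var _ => rfl
  | .mu m => by simp only [MTm.subst, upC_var_covar, MMach.subst_var_covar]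
  | .muPair m => by simp only [MTm.subst, upC_var_covar, upT_var_covar, MMach.subst_var_covar]
  | .injl t => by simp only [MTm.subst, MTm.subst_var_covar]
  | .injr t => by simp only [MTm.subst, MTm.subst_var_covar]

theorem MCo.subst_var_covar : ∀ s : MCo, s.subst MTm.var MCo.covar = s
  | .covar _ => rfl
  | .cons t e => by simp only [MCo.subst, MTm.subst_var_covar, MCo.subst_var_covar]
  | .mutilde m => by simp only [MCo.subst, upT_var_covar, MMach.subst_var_covar]
  | .case m₁ m₂ => by simp only [MCo.subst, upT_var_covar, MMach.subst_var_covar]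

theorem MMach.subst_var_covar : ∀ s : MMach, s.subst MTm.var MCo.covar = s
  | .conf t e => by simp only [MMach.subst, MTm.subst_var_covar, MCo.subst_var_covar]
end

theorem MMach.substCo_subst_upC (σt : ℕ → MTm) (σc : ℕ → MCo) (m : MMach) (e : MCo) :
    (m.subst (upC σt σc).1 (upC σt σc).2).substCo e = m.subst σt (scons e σc) := by
  rw [MMach.substCo, MMach.subst_subst]
  congr 1 <;> funext n <;> cases n <;>
    simp only [MCo.subst, Function.comp_def, id_eq, upC, scons, MTm.subst_rename,
      MCo.subst_rename, MTm.subst_var_covar, MCo.subst_var_covar]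

theorem MMach.substTm_subst_upT (σt : ℕ → MTm) (σc : ℕ → MCo) (m : MMach) (u : MTm) :
    (m.subst (upT σt σc).1 (upT σt σc).2).substTm u = m.subst (scons u σt) σc := by
  rw [MMach.substTm, MMach.subst_subst]
  congr 1 <;> funext n <;> cases n <;>
    simp only [MTm.subst, Function.comp_def, id_eq, upT, scons, MTm.subst_rename,
      MCo.subst_rename, MTm.subst_var_covar, MCo.subst_var_covar]

theorem MMach.substTmCo_subst_upT_upC (σt : ℕ → MTm) (σc : ℕ → MCo) (m : MMach) (u : MTm)
    (e : MCo) :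
    (m.subst (upT (upC σt σc).1 (upC σt σc).2).1
      (upT (upC σt σc).1 (upC σt σc).2).2).substTmCo u e =
      m.subst (scons u σt) (scons e σc) := by
  rw [MMach.substTmCo, MMach.subst_subst]
  congr 1 <;> funext n <;> cases n <;>
    simp only [MTm.subst, MCo.subst, Function.comp_def, id_eq, upT, upC, scons,
      MTm.rename_rename, MCo.rename_rename, MTm.subst_rename, MCo.subst_rename,
      MTm.subst_var_covar, MCo.subst_var_covar]

/-- `|A|` is the orthogonal of `falv A`: this is `‖A→B‖v` for an arrow and `‖A‖ = (|A|v)⊥` for the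
positive types. -/
def falv (pole : MMach → Prop) (baseTruv : Set MTm) : Ty → Set MCo
  | .base => orthC pole baseTruv
  | .arrow A B => {c | ∃ u e, c = .cons u e ∧ u ∈ tru pole baseTruv A ∧
      e ∈ fal pole baseTruv B}
  | .sum A B => orthC pole
      {t | (∃ u, t = .injl u ∧ u ∈ tru pole baseTruv A) ∨
           (∃ u, t = .injr u ∧ u ∈ tru pole baseTruv B)}

def ClosedUnderAntiReduction (pole : MMach → Prop) : Prop :=
  ∀ m m', StepM m m' → pole m' → pole m

def Realizes (pole : MMach → Prop) (baseTruv : Set MTm) (Γ : List Ty) (σ : ℕ → MTm) : Prop :=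
  ∀ n B, Γ[n]? = some B → σ n ∈ tru pole baseTruv B

section Realizability

variable {pole : MMach → Prop} {baseTruv : Set MTm}

theorem tru_eq_orthT_falv (A : Ty) :
    tru pole baseTruv A = orthT pole (falv pole baseTruv A) := by
  cases A <;> rfl

theorem pole_conf_of_mem_tru {A : Ty} {t : MTm} {e : MCo} (ht : t ∈ tru pole baseTruv A)
    (he : e ∈ falv pole baseTruv A) : pole (.conf t e) := by
  rw [tru_eq_orthT_falv] at ht
  exact ht e he

theorem falv_subset_fal (A : Ty) : falv pole baseTruv A ⊆ fal pole baseTruv A :=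
  fun _ he _ ht => pole_conf_of_mem_tru ht he

theorem mu_mem_tru (hpole : ClosedUnderAntiReduction pole) {A : Ty} {m : MMach}
    (h : ∀ e ∈ falv pole baseTruv A, pole (m.substCo e)) : MTm.mu m ∈ tru pole baseTruv A := by
  rw [tru_eq_orthT_falv]
  exact fun e he => hpole _ _ (.mu m e) (h e he)

theorem muPair_mem_tru_arrow (hpole : ClosedUnderAntiReduction pole) {A B : Ty}
    {m : MMach} (h : ∀ u ∈ tru pole baseTruv A, ∀ e ∈ fal pole baseTruv B, pole (m.substTmCo u e)) :
    MTm.muPair m ∈ tru pole baseTruv (.arrow A B) := by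
  rintro _ ⟨u, e, rfl, hu, he⟩
  exact hpole _ _ (.muPair m u e) (h u hu e he)

theorem injl_mem_tru_sum {A B : Ty} {u : MTm} (hu : u ∈ tru pole baseTruv A) :
    MTm.injl u ∈ tru pole baseTruv (.sum A B) :=
  fun _ he => he _ (.inl ⟨u, rfl, hu⟩)

theorem injr_mem_tru_sum {A B : Ty} {u : MTm} (hu : u ∈ tru pole baseTruv B) :
    MTm.injr u ∈ tru pole baseTruv (.sum A B) :=
  fun _ he => he _ (.inr ⟨u, rfl, hu⟩)

theorem case_mem_falv_sum (hpole : ClosedUnderAntiReduction pole) {A B : Ty}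
    {m₁ m₂ : MMach} (h₁ : ∀ u ∈ tru pole baseTruv A, pole (m₁.substTm u))
    (h₂ : ∀ u ∈ tru pole baseTruv B, pole (m₂.substTm u)) :
    MCo.case m₁ m₂ ∈ falv pole baseTruv (.sum A B) := by
  rintro _ (⟨u, rfl, hu⟩ | ⟨u, rfl, hu⟩)
  · exact hpole _ _ (.casel u m₁ m₂) (h₁ u hu)
  · exact hpole _ _ (.caser u m₁ m₂) (h₂ u hu)

theorem Realizes.cons {Γ : List Ty} {σ : ℕ → MTm} {A : Ty} {u : MTm}
    (hσ : Realizes pole baseTruv Γ σ) (hu : u ∈ tru pole baseTruv A) :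
    Realizes pole baseTruv (A :: Γ) (scons u σ)
  | 0, _, h => by cases h; exact hu
  | n + 1, B, h => hσ n B h

theorem transl_subst_mem_tru (hpole : ClosedUnderAntiReduction pole) {Γ : List Ty}
    {t : LTm} {A : Ty} (ht : HasTy Γ t A) {σ : ℕ → MTm} (hσ : Realizes pole baseTruv Γ σ)
    (σc : ℕ → MCo) : (transl t).subst σ σc ∈ tru pole baseTruv A := by
  induction ht generalizing σ σc with
  | var h => exact hσ _ _ h
  | lam _ ih =>
    refine muPair_mem_tru_arrow hpole fun u hu e he => ?_
    rw [MMach.substTmCo_subst_upT_upC]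
    exact he _ (ih (hσ.cons hu) _)
  | app _ _ ihf iha =>
    refine mu_mem_tru hpole fun e he => ?_
    rw [MMach.substCo_subst_upC]
    exact pole_conf_of_mem_tru (ihf hσ _) ⟨_, e, rfl, iha hσ _, falv_subset_fal _ he⟩
  | injl _ ih => exact injl_mem_tru_sum (ih hσ σc)
  | injr _ ih => exact injr_mem_tru_sum (ih hσ σc)
  | case _ _ _ ih ih₁ ih₂ =>
    refine mu_mem_tru hpole fun e he => ?_
    rw [MMach.substCo_subst_upC]
    refine pole_conf_of_mem_tru (ih hσ _)
      (case_mem_falv_sum hpole (fun u hu => ?_) (fun u hu => ?_))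
    · rw [MMach.substTm_subst_upT]
      exact pole_conf_of_mem_tru (ih₁ (hσ.cons hu) _) he
    · rw [MMach.substTm_subst_upT]
      exact pole_conf_of_mem_tru (ih₂ (hσ.cons hu) _) he

end Realizability

/-- Adequacy for the simply-typed λ-calculus with sums in the μμ̃ machine:
if Γ ⊢ t : A and σ maps each (x:B) ∈ Γ to a truth witness of B, then
⟦t⟧[σ] ∈ |A|, for any pole closed under anti-reduction. -/
theorem adequacy (pole : MMach → Prop)
    (hpole : ∀ m m', StepM m m' → pole m' → pole m)
    (baseTruv : Set MTm)
    {Γ : List Ty} {t : LTm} {A : Ty} (ht : HasTy Γ t A)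
    (σ : Nat → MTm) (hσ : ∀ n B, Γ[n]? = some B → σ n ∈ tru pole baseTruv B) :
    MTm.subst σ MCo.covar (transl t) ∈ tru pole baseTruv A :=
  transl_subst_mem_tru hpole ht hσ MCo.covar
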